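/- Let $r:\mathbb{N}\to\mathbb{R}\setminus\{0\}$, $a,b:\mathbb{N}\to\mathbb{R}$ satisfy $\sum_{s=1}^{\infty}|1/r_s|\sum_{t=s}^{\infty}|a_t|<\infty$ and $\sum_{s=1}^{\infty}|1/r_s|\sum_{t=s}^{\infty}|b_t|<\infty$. Let $q:\mathbb{N}\to\mathbb{R}$ with $\sup_n|q_n|=q^\star<1$, let $\tau\in\mathbb{N}\cup\{0\}$, $\sigma\in\mathbb{Z}$, and let $f:\mathbb{R}\to\mathbb{R}$ be locally Lipschitz. Then there exist $k\in\mathbb{N}$ and a bounded sequence $x:\mathbb{N}_k\to\mathbb{R}$ satisfying $\Delta(r_n\Delta(x_n+q_nx_{n-\tau}))=a_nf(x_{n-\sigma})+b_n$ for all $n\ge k$. -/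

import Mathlib

/-!
Banach's fixed point theorem. Since `f` is Lipschitz and bounded on `[-1, 1]`, `|q n| ≤ q⋆ < 1`
and the iterated tails `∑_{s ≥ m} |r s|⁻¹ ∑_{t ≥ s} |a t|` (and likewise for `b`) tend to `0`,
for `k` large the map
`x ↦ (n ↦ -q m * x (m - τ) + ∑_{s ≥ m} (r s)⁻¹ ∑_{t ≥ s} (a t * f (x (t - σ)) + b t))`,
`m = max n k`, is a contraction of the closed unit ball of bounded sequences. Its fixed point
satisfies `x n + q n * x (n - τ) = ∑_{s ≥ n} (r s)⁻¹ ∑_{t ≥ s} (a t * f (x (t - σ)) + b t)` for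
`n ≥ k`, and `Δ (r Δ ·)` applied to such an iterated tail gives back the summand.
-/

open Filter Topology Metric BoundedContinuousFunction
open scoped NNReal

noncomputable def tailSum (v : ℕ → ℝ) (n : ℕ) : ℝ := ∑' t, v (n + t)

section TailSum

variable {v w : ℕ → ℝ}

lemma Summable.comp_add_left (hv : Summable v) (n : ℕ) : Summable fun t => v (n + t) := by
  simpa only [add_comm n] using (summable_nat_add_iff n).2 hv

lemma Summable.tailSum_eq_add_tailSum_succ (hv : Summable v) (n : ℕ) :
    tailSum v n = v n + tailSum v (n + 1) := by
  simp only [tailSum, (hv.comp_add_left n).tsum_eq_zero_add, add_zero, add_assoc n 1, add_comm 1]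

lemma Summable.tailSum_add (hv : Summable v) (hw : Summable w) (n : ℕ) :
    tailSum (fun t => v t + w t) n = tailSum v n + tailSum w n :=
  (hv.comp_add_left n).tsum_add (hw.comp_add_left n)

lemma Summable.tailSum_sub (hv : Summable v) (hw : Summable w) (n : ℕ) :
    tailSum (fun t => v t - w t) n = tailSum v n - tailSum w n :=
  (hv.comp_add_left n).tsum_sub (hw.comp_add_left n)

lemma tailSum_const_mul (c : ℝ) (v : ℕ → ℝ) (n : ℕ) :
    tailSum (fun t => c * v t) n = c * tailSum v n :=
  tsum_mul_left

lemma abs_tailSum_le (hw : Summable w) (h : ∀ t, |v t| ≤ w t) (n : ℕ) :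
    |tailSum v n| ≤ tailSum w n :=
  tsum_of_norm_bounded (f := fun t => v (n + t)) (hw.comp_add_left n).hasSum fun t => h (n + t)

lemma tendsto_tailSum_atTop (v : ℕ → ℝ) : Tendsto (tailSum v) atTop (𝓝 0) :=
  (tendsto_sum_nat_add v).congr fun n => tsum_congr fun t => congrArg v (add_comm t n)

end TailSum

noncomputable def doubleTail (r v : ℕ → ℝ) : ℕ → ℝ :=
  tailSum fun s => tailSum v s / r s

def DoubleTailSummable (r v : ℕ → ℝ) : Prop :=
  Summable v ∧ Summable fun s => tailSum v s / r s

section DoubleTail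

variable {r v w : ℕ → ℝ}

lemma abs_tailSum_div_le (hw : Summable w) (h : ∀ t, |v t| ≤ w t) (s : ℕ) :
    |tailSum v s / r s| ≤ tailSum w s / |r s| := by
  rw [abs_div]
  exact div_le_div_of_nonneg_right (abs_tailSum_le hw h s) (abs_nonneg _)

lemma DoubleTailSummable.of_abs_le (hw : DoubleTailSummable (fun s => |r s|) w)
    (h : ∀ t, |v t| ≤ w t) : DoubleTailSummable r v :=
  ⟨hw.1.of_norm_bounded h, hw.2.of_norm_bounded (abs_tailSum_div_le hw.1 h)⟩

lemma DoubleTailSummable.add (hv : DoubleTailSummable r v) (hw : DoubleTailSummable r w) :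
    DoubleTailSummable r fun t => v t + w t := by
  refine ⟨hv.1.add hw.1, (hv.2.add hw.2).congr fun s => ?_⟩
  rw [hv.1.tailSum_add hw.1, add_div]

lemma DoubleTailSummable.const_mul (hv : DoubleTailSummable r v) (c : ℝ) :
    DoubleTailSummable r fun t => c * v t := by
  refine ⟨hv.1.mul_left c, (hv.2.mul_left c).congr fun s => ?_⟩
  rw [tailSum_const_mul, mul_div_assoc]

lemma doubleTail_const_mul (c : ℝ) (r v : ℕ → ℝ) (n : ℕ) :
    doubleTail r (fun t => c * v t) n = c * doubleTail r v n := by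
  simp only [doubleTail, tailSum_const_mul, mul_div_assoc]

lemma DoubleTailSummable.doubleTail_add (hv : DoubleTailSummable r v)
    (hw : DoubleTailSummable r w) (n : ℕ) :
    doubleTail r (fun t => v t + w t) n = doubleTail r v n + doubleTail r w n := by
  simp only [doubleTail, hv.1.tailSum_add hw.1, add_div]
  exact hv.2.tailSum_add hw.2 n

lemma DoubleTailSummable.doubleTail_sub (hv : DoubleTailSummable r v)
    (hw : DoubleTailSummable r w) (n : ℕ) :
    doubleTail r (fun t => v t - w t) n = doubleTail r v n - doubleTail r w n := by
  simp only [doubleTail, hv.1.tailSum_sub hw.1, sub_div]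
  exact hv.2.tailSum_sub hw.2 n

lemma abs_doubleTail_le (hw : DoubleTailSummable (fun s => |r s|) w) (h : ∀ t, |v t| ≤ w t)
    (n : ℕ) : |doubleTail r v n| ≤ doubleTail (fun s => |r s|) w n :=
  abs_tailSum_le hw.2 (abs_tailSum_div_le hw.1 h) n

lemma tendsto_doubleTail_atTop (r v : ℕ → ℝ) : Tendsto (doubleTail r v) atTop (𝓝 0) :=
  tendsto_tailSum_atTop _

lemma DoubleTailSummable.mul_doubleTail_succ_sub (hv : DoubleTailSummable r v) {n : ℕ}
    (hr : r n ≠ 0) :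
    r n * (doubleTail r v (n + 1) - doubleTail r v n) = -tailSum v n := by
  have h : doubleTail r v n = tailSum v n / r n + doubleTail r v (n + 1) :=
    hv.2.tailSum_eq_add_tailSum_succ n
  rw [h]
  field_simp
  ring

lemma DoubleTailSummable.second_difference_doubleTail (hv : DoubleTailSummable r v)
    (hr : ∀ n, r n ≠ 0) (n : ℕ) :
    r (n + 1) * (doubleTail r v (n + 2) - doubleTail r v (n + 1)) -
      r n * (doubleTail r v (n + 1) - doubleTail r v n) = v n := by
  rw [hv.mul_doubleTail_succ_sub (hr (n + 1)), hv.mul_doubleTail_succ_sub (hr n),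
    hv.1.tailSum_eq_add_tailSum_succ n]
  ring

end DoubleTail

lemma exists_fixedPoint_of_norm_le {α E : Type*} [TopologicalSpace α] [DiscreteTopology α]
    [NormedAddCommGroup E] [CompleteSpace E] (T : (α → E) → α → E) {M c : ℝ}
    (hM : 0 ≤ M) (hc0 : 0 ≤ c) (hc1 : c < 1)
    (hmaps : ∀ x, (∀ n, ‖x n‖ ≤ M) → ∀ n, ‖T x n‖ ≤ M)
    (hcontr : ∀ x y d, (∀ n, ‖x n‖ ≤ M) → (∀ n, ‖y n‖ ≤ M) → (∀ n, ‖x n - y n‖ ≤ d) →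
      ∀ n, ‖T x n - T y n‖ ≤ c * d) :
    ∃ x, (∀ n, ‖x n‖ ≤ M) ∧ T x = x := by
  set B := closedBall (0 : α →ᵇ E) M
  have mem_B : ∀ x : α →ᵇ E, x ∈ B ↔ ∀ n, ‖x n‖ ≤ M := fun x => by
    rw [mem_closedBall_zero_iff, BoundedContinuousFunction.norm_le hM]
  let Φ : B → B := fun x =>
    ⟨.ofNormedAddCommGroupDiscrete (T x) M (hmaps x ((mem_B x).1 x.2)),
      (mem_B _).2 (hmaps x ((mem_B x).1 x.2))⟩
  have hΦ : ContractingWith ⟨c, hc0⟩ Φ := by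
    refine ⟨hc1, LipschitzWith.of_dist_le_mul fun x y => ?_⟩
    refine (BoundedContinuousFunction.dist_le (by positivity)).2 fun n => ?_
    rw [dist_eq_norm]
    exact hcontr x y _ ((mem_B x).1 x.2) ((mem_B y).1 y.2)
      (fun n => (dist_eq_norm _ _).symm.trans_le (dist_coe_le_dist (f := x.1) (g := y.1) n)) n
  have : CompleteSpace B := isClosed_closedBall.completeSpace_coe
  have : Nonempty B := ⟨⟨0, mem_closedBall_self hM⟩⟩
  let x := ContractingWith.fixedPoint Φ hΦ
  exact ⟨x, (mem_B x).1 x.2, congrArg (⇑) (congrArg Subtype.val hΦ.fixedPoint_isFixedPt)⟩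

lemma LipschitzOnWith.abs_le_of_abs_le {f : ℝ → ℝ} {K : ℝ≥0} {M u : ℝ}
    (hf : LipschitzOnWith K f (closedBall 0 M)) (hu : |u| ≤ M) : |f u| ≤ |f 0| + K * M := by
  have h := hf.dist_le_mul u (mem_closedBall_zero_iff.2 hu) 0
    (mem_closedBall_self ((abs_nonneg u).trans hu))
  rw [Real.dist_eq, Real.dist_eq, sub_zero] at h
  linarith [abs_sub_abs_le_abs_sub (f u) (f 0), mul_le_mul_of_nonneg_left hu K.coe_nonneg]

def forcing (a b : ℕ → ℝ) (σ : ℤ) (f : ℝ → ℝ) (x : ℕ → ℝ) (n : ℕ) : ℝ :=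
  a n * f (x ((n : ℤ) - σ).toNat) + b n

section Forcing

variable {r a b : ℕ → ℝ} {σ : ℤ} {f : ℝ → ℝ} {x y : ℕ → ℝ} {M C d : ℝ} {K : ℝ≥0}

lemma abs_forcing_le (hfC : ∀ u, |u| ≤ M → |f u| ≤ C) (hx : ∀ n, |x n| ≤ M) (t : ℕ) :
    |forcing a b σ f x t| ≤ C * |a t| + |b t| := by
  refine (abs_add_le _ _).trans ?_
  rw [abs_mul, mul_comm C]
  gcongr
  exact hfC _ (hx _)

lemma abs_forcing_sub_le (hfK : LipschitzOnWith K f (closedBall 0 M)) (hx : ∀ n, |x n| ≤ M)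
    (hy : ∀ n, |y n| ≤ M) (hd : ∀ n, |x n - y n| ≤ d) (t : ℕ) :
    |forcing a b σ f x t - forcing a b σ f y t| ≤ K * d * |a t| := by
  set i := ((t : ℤ) - σ).toNat
  have hf : |f (x i) - f (y i)| ≤ K * d :=
    (hfK.dist_le_mul _ (mem_closedBall_zero_iff.2 (hx i)) _
      (mem_closedBall_zero_iff.2 (hy i))).trans (by gcongr; exact hd i)
  calc |forcing a b σ f x t - forcing a b σ f y t| = |a t| * |f (x i) - f (y i)| := by
        rw [← abs_mul]; congr 1; simp only [forcing]; ring
    _ ≤ K * d * |a t| := by rw [mul_comm]; gcongr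

lemma doubleTailSummable_forcing (hA : DoubleTailSummable (fun s => |r s|) fun t => |a t|)
    (hB : DoubleTailSummable (fun s => |r s|) fun t => |b t|) (hfC : ∀ u, |u| ≤ M → |f u| ≤ C)
    (hx : ∀ n, |x n| ≤ M) :
    DoubleTailSummable r (forcing a b σ f x) :=
  ((hA.const_mul C).add hB).of_abs_le (abs_forcing_le hfC hx)

lemma abs_doubleTail_forcing_le (hA : DoubleTailSummable (fun s => |r s|) fun t => |a t|)
    (hB : DoubleTailSummable (fun s => |r s|) fun t => |b t|) (hfC : ∀ u, |u| ≤ M → |f u| ≤ C)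
    (hx : ∀ n, |x n| ≤ M) (n : ℕ) :
    |doubleTail r (forcing a b σ f x) n| ≤
      C * doubleTail (fun s => |r s|) (fun t => |a t|) n +
        doubleTail (fun s => |r s|) (fun t => |b t|) n := by
  rw [← doubleTail_const_mul, ← (hA.const_mul C).doubleTail_add hB]
  exact abs_doubleTail_le ((hA.const_mul C).add hB) (abs_forcing_le hfC hx) n

lemma abs_doubleTail_forcing_sub_le (hA : DoubleTailSummable (fun s => |r s|) fun t => |a t|)
    (hB : DoubleTailSummable (fun s => |r s|) fun t => |b t|) (hfC : ∀ u, |u| ≤ M → |f u| ≤ C)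
    (hfK : LipschitzOnWith K f (closedBall 0 M))
    (hx : ∀ n, |x n| ≤ M) (hy : ∀ n, |y n| ≤ M) (hd : ∀ n, |x n - y n| ≤ d) (n : ℕ) :
    |doubleTail r (forcing a b σ f x) n - doubleTail r (forcing a b σ f y) n| ≤
      K * d * doubleTail (fun s => |r s|) (fun t => |a t|) n := by
  rw [← (doubleTailSummable_forcing hA hB hfC hx).doubleTail_sub
    (doubleTailSummable_forcing hA hB hfC hy), ← doubleTail_const_mul]
  exact abs_doubleTail_le (hA.const_mul _) (abs_forcing_sub_le hfK hx hy hd) n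

end Forcing

noncomputable def solutionMap (r a b q : ℕ → ℝ) (τ : ℕ) (σ : ℤ) (f : ℝ → ℝ) (k : ℕ)
    (x : ℕ → ℝ) (n : ℕ) : ℝ :=
  -q (max n k) * x (max n k - τ) + doubleTail r (forcing a b σ f x) (max n k)

section SolutionMap

variable {r a b q : ℕ → ℝ} {τ k : ℕ} {σ : ℤ} {f : ℝ → ℝ} {x y : ℕ → ℝ} {qstar M C c d : ℝ}
  {K : ℝ≥0}

lemma abs_solutionMap_le (hq : ∀ n, |q n| ≤ qstar)
    (hA : DoubleTailSummable (fun s => |r s|) fun t => |a t|)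
    (hB : DoubleTailSummable (fun s => |r s|) fun t => |b t|) (hfC : ∀ u, |u| ≤ M → |f u| ≤ C)
    (hk : ∀ m ≥ k, qstar * M + (C * doubleTail (fun s => |r s|) (fun t => |a t|) m +
      doubleTail (fun s => |r s|) (fun t => |b t|) m) ≤ M)
    (hx : ∀ n, |x n| ≤ M) (n : ℕ) :
    |solutionMap r a b q τ σ f k x n| ≤ M := by
  have hq0 : 0 ≤ qstar := (abs_nonneg _).trans (hq 0)
  calc |solutionMap r a b q τ σ f k x n|
      ≤ |q (max n k)| * |x (max n k - τ)| + |doubleTail r (forcing a b σ f x) (max n k)| := by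
        rw [solutionMap, ← abs_mul, ← abs_neg (q _ * _), ← neg_mul]
        exact abs_add_le _ _
    _ ≤ M := by
        refine le_trans ?_ (hk _ (le_max_right n k))
        gcongr
        exacts [hq _, hx _, abs_doubleTail_forcing_le hA hB hfC hx _]

lemma abs_solutionMap_sub_le (hq : ∀ n, |q n| ≤ qstar)
    (hA : DoubleTailSummable (fun s => |r s|) fun t => |a t|)
    (hB : DoubleTailSummable (fun s => |r s|) fun t => |b t|) (hfC : ∀ u, |u| ≤ M → |f u| ≤ C)
    (hfK : LipschitzOnWith K f (closedBall 0 M))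
    (hk : ∀ m ≥ k, qstar + K * doubleTail (fun s => |r s|) (fun t => |a t|) m ≤ c)
    (hx : ∀ n, |x n| ≤ M) (hy : ∀ n, |y n| ≤ M) (hd : ∀ n, |x n - y n| ≤ d) (n : ℕ) :
    |solutionMap r a b q τ σ f k x n - solutionMap r a b q τ σ f k y n| ≤ c * d := by
  have hq0 : 0 ≤ qstar := (abs_nonneg _).trans (hq 0)
  have hd0 : 0 ≤ d := (abs_nonneg _).trans (hd 0)
  set m := max n k
  calc |solutionMap r a b q τ σ f k x n - solutionMap r a b q τ σ f k y n|
      ≤ |q m| * |x (m - τ) - y (m - τ)| +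
          |doubleTail r (forcing a b σ f x) m - doubleTail r (forcing a b σ f y) m| := by
        rw [← abs_mul, ← abs_neg (q m * _)]
        refine le_of_eq_of_le ?_ (abs_add_le _ _)
        congr 1
        simp only [solutionMap, m]
        ring
    _ ≤ qstar * d + K * d * doubleTail (fun s => |r s|) (fun t => |a t|) m := by
        gcongr
        exacts [hq _, hd _, abs_doubleTail_forcing_sub_le hA hB hfC hfK hx hy hd m]
    _ = (qstar + K * doubleTail (fun s => |r s|) (fun t => |a t|) m) * d := by ring
    _ ≤ c * d := mul_le_mul_of_nonneg_right (hk m (le_max_right n k)) hd0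

lemma exists_solutionMap_eq_self (hq : ∀ n, |q n| ≤ qstar) (hq1 : qstar < 1)
    (hA : DoubleTailSummable (fun s => |r s|) fun t => |a t|)
    (hB : DoubleTailSummable (fun s => |r s|) fun t => |b t|) (hfC : ∀ u, |u| ≤ M → |f u| ≤ C)
    (hfK : LipschitzOnWith K f (closedBall 0 M)) (hM : 0 ≤ M)
    (hk : ∀ m ≥ k, C * doubleTail (fun s => |r s|) (fun t => |a t|) m +
        doubleTail (fun s => |r s|) (fun t => |b t|) m ≤ (1 - qstar) * M ∧
      K * doubleTail (fun s => |r s|) (fun t => |a t|) m ≤ (1 - qstar) / 2) :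
    ∃ x, (∀ n, |x n| ≤ M) ∧ solutionMap r a b q τ σ f k x = x := by
  have hq0 : 0 ≤ qstar := (abs_nonneg _).trans (hq 0)
  exact exists_fixedPoint_of_norm_le (solutionMap r a b q τ σ f k) hM
    (by linarith : 0 ≤ (1 + qstar) / 2) (by linarith)
    (fun x hx => abs_solutionMap_le hq hA hB hfC (fun m hm => by linarith [(hk m hm).1]) hx)
    (fun x y d hx hy hd => abs_solutionMap_sub_le hq hA hB hfC hfK
      (fun m hm => by linarith [(hk m hm).2]) hx hy hd)

lemma second_difference_of_solutionMap_eq_self (hr : ∀ n, r n ≠ 0)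
    (hA : DoubleTailSummable (fun s => |r s|) fun t => |a t|)
    (hB : DoubleTailSummable (fun s => |r s|) fun t => |b t|) (hfC : ∀ u, |u| ≤ M → |f u| ≤ C)
    (hx : ∀ n, |x n| ≤ M) (hfix : solutionMap r a b q τ σ f k x = x) {n : ℕ} (hn : k ≤ n) :
    r (n + 1) * ((x (n + 2) + q (n + 2) * x (n + 2 - τ)) -
        (x (n + 1) + q (n + 1) * x (n + 1 - τ))) -
      r n * ((x (n + 1) + q (n + 1) * x (n + 1 - τ)) - (x n + q n * x (n - τ))) =
      forcing a b σ f x n := by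
  have hsol : ∀ m ≥ k, x m + q m * x (m - τ) = doubleTail r (forcing a b σ f x) m := by
    intro m hm
    have h := congrFun hfix m
    rw [solutionMap, max_eq_left hm] at h
    linarith
  rw [hsol n hn, hsol (n + 1) (by omega), hsol (n + 2) (by omega)]
  exact (doubleTailSummable_forcing hA hB hfC hx).second_difference_doubleTail hr n

end SolutionMap

/-- Existence of a bounded solution to
`Δ(r n * Δ(x n + q n * x (n-τ))) = a n * f (x (n-σ)) + b n`
under summability of the iterated tail series and `sup |q n| = q⋆ < 1`. -/
theorem stmt_0 (r a b q : ℕ → ℝ) (τ : ℕ) (σ : ℤ) (f : ℝ → ℝ)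
    (hr : ∀ n, r n ≠ 0)
    (ha : Summable fun t => |a t|) (hb : Summable fun t => |b t|)
    (hsa : Summable fun s => |1 / r s| * ∑' t : ℕ, |a (s + t)|)
    (hsb : Summable fun s => |1 / r s| * ∑' t : ℕ, |b (s + t)|)
    (qstar : ℝ) (hq : ∀ n, |q n| ≤ qstar) (hq1 : qstar < 1)
    (hf : LocallyLipschitz f) :
    ∃ k : ℕ, τ ≤ k ∧ σ ≤ (k : ℤ) ∧
      ∃ x : ℕ → ℝ, (∃ M : ℝ, ∀ n ≥ k, |x n| ≤ M) ∧
        ∀ n ≥ k,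
          (r (n + 1) *
              ((x (n + 2) + q (n + 2) * x (n + 2 - τ)) -
                (x (n + 1) + q (n + 1) * x (n + 1 - τ))) -
            r n *
              ((x (n + 1) + q (n + 1) * x (n + 1 - τ)) -
                (x n + q n * x (n - τ)))) =
            a n * f (x ((n : ℤ) - σ).toNat) + b n := by
  obtain ⟨K, hfK⟩ :=
    hf.locallyLipschitzOn.exists_lipschitzOnWith_of_compact (isCompact_closedBall (0 : ℝ) 1)
  have hA : DoubleTailSummable (fun s => |r s|) fun t => |a t| :=
    ⟨ha, by simpa [tailSum, div_eq_inv_mul] using hsa⟩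
  have hB : DoubleTailSummable (fun s => |r s|) fun t => |b t| :=
    ⟨hb, by simpa [tailSum, div_eq_inv_mul] using hsb⟩
  set A := doubleTail (fun s => |r s|) fun t => |a t|
  set B := doubleTail (fun s => |r s|) fun t => |b t|
  have hA0 : Tendsto A atTop (𝓝 0) := tendsto_doubleTail_atTop _ _
  have hB0 : Tendsto B atTop (𝓝 0) := tendsto_doubleTail_atTop _ _
  have hsmall : ∀ᶠ m in atTop,
      (|f 0| + K * 1) * A m + B m ≤ (1 - qstar) * 1 ∧ K * A m ≤ (1 - qstar) / 2 := by
    refine (((hA0.const_mul _).add hB0).eventually (ge_mem_nhds ?_)).and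
      ((hA0.const_mul _).eventually (ge_mem_nhds ?_)) <;> linarith
  obtain ⟨k, hk⟩ := eventually_atTop.1 (hsmall.and (eventually_ge_atTop (max τ σ.toNat)))
  obtain ⟨x, hx, hfix⟩ := exists_solutionMap_eq_self hq hq1 hA hB (fun u => hfK.abs_le_of_abs_le)
    hfK zero_le_one fun m hm => (hk m hm).1
  have hkτσ := (hk k le_rfl).2
  exact ⟨k, le_of_max_le_left hkτσ, (Int.self_le_toNat σ).trans (by omega), x,
    ⟨1, fun n _ => hx n⟩, fun n hn => second_difference_of_solutionMap_eq_self hr hA hB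
      (fun u => hfK.abs_le_of_abs_le) hx hfix hn⟩
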